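/- arXiv:1909.10756 — 6 statements merged into one kernel-verified Lean document; each statement's English description precedes it below -/
import Mathlib

section
/- For 0 < γ < 1 and every integer k ≥ 0, the coefficient q_k = -8((k+1)^{3-γ} - k^{3-γ}) + 4(3-γ)((k+1)^{2-γ} + k^{2-γ}) satisfies q_k > (2/3)(3-γ)(2-γ)(1-γ)(k+1)^{-γ}; in particular q_k > 0. -/
/-!
With `f x = x ^ (3 - γ)` one has `q_k / 8 = (f' k + f' (k + 1)) / 2 - (f (k + 1) - f k)`,
the error of the trapezoidal rule for `f'` on `[k, k + 1]`. That error is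
`∫ (x - k) (k + 1 - x) f''' x / 2`, and `f''' x = (3 - γ) (2 - γ) (1 - γ) x ^ (-γ)` is strictly
larger than its value at `k + 1` inside the interval; since `∫ (x - k) (k + 1 - x) / 2 = 1 / 12`,
this gives the bound.
-/

open Set

theorem mul_cube_div_twelve_lt_trapezoid_error {f f' f'' f''' : ℝ → ℝ} {a b m : ℝ}
    (hab : a < b)
    (hf : ∀ x ∈ Icc a b, HasDerivAt f (f' x) x)
    (hf' : ∀ x ∈ Icc a b, HasDerivAt f' (f'' x) x)
    (hf''_cont : ContinuousOn f'' (Icc a b))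
    (hf'' : ∀ x ∈ Ioo a b, HasDerivAt f'' (f''' x) x)
    (hm : ∀ x ∈ Ioo a b, m < f''' x) :
    m * (b - a) ^ 3 / 12 < (b - a) / 2 * (f' a + f' b) - (f b - f a) := by
  -- `E x` is the trapezoidal error on `[a, x]` minus the claimed bound: `E a = E' a = 0` and
  -- `E'' x = (x - a) (f''' x - m) / 2 > 0`.
  set E : ℝ → ℝ := fun x => (x - a) / 2 * (f' a + f' x) - (f x - f a) - m * (x - a) ^ 3 / 12
  set D : ℝ → ℝ := fun x => (f' a - f' x) / 2 + (x - a) / 2 * f'' x - m * (x - a) ^ 2 / 4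
  have hD_deriv : ∀ x ∈ Ioo a b, HasDerivAt D ((x - a) / 2 * (f''' x - m)) x := by
    intro x hx
    have hf'x := hf' x (Ioo_subset_Icc_self hx)
    have := (((hasDerivAt_const x (f' a)).fun_sub hf'x).div_const 2).fun_add
      ((((hasDerivAt_id' x).sub_const a).div_const 2).fun_mul (hf'' x hx)) |>.fun_sub
      ((((hasDerivAt_id' x).sub_const a).fun_pow 2).const_mul m |>.div_const 4)
    refine this.congr_deriv ?_
    norm_num
    ring
  have hD_cont : ContinuousOn D (Icc a b) := by
    have hf'_cont : ContinuousOn f' (Icc a b) := fun x hx =>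
      (hf' x hx).continuousAt.continuousWithinAt
    simp only [D]
    fun_prop
  have hD_mono : StrictMonoOn D (Icc a b) := by
    refine strictMonoOn_of_hasDerivWithinAt_pos (convex_Icc a b) hD_cont
      (f' := fun x => (x - a) / 2 * (f''' x - m))
      (fun x hx => ?_) (fun x hx => ?_) <;> rw [interior_Icc] at hx
    · exact (hD_deriv x hx).hasDerivWithinAt
    · exact mul_pos (by linarith [hx.1]) (sub_pos.2 (hm x hx))
  have hE_deriv : ∀ x ∈ Icc a b, HasDerivAt E (D x) x := by
    intro x hx
    have := ((((hasDerivAt_id' x).sub_const a).div_const 2).fun_mul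
      ((hasDerivAt_const x (f' a)).fun_add (hf' x hx))).fun_sub
      ((hf x hx).sub_const (f a)) |>.fun_sub
      ((((hasDerivAt_id' x).sub_const a).fun_pow 3).const_mul m |>.div_const 12)
    refine this.congr_deriv ?_
    norm_num [D]
    ring
  have hE_mono : StrictMonoOn E (Icc a b) := by
    refine strictMonoOn_of_hasDerivWithinAt_pos (convex_Icc a b) (f' := D)
      (fun x hx => (hE_deriv x hx).continuousAt.continuousWithinAt)
      (fun x hx => ?_) (fun x hx => ?_) <;> rw [interior_Icc] at hx
    · exact (hE_deriv x (Ioo_subset_Icc_self hx)).hasDerivWithinAt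
    · have hDa : D a = 0 := by simp [D]
      exact hDa ▸ hD_mono (left_mem_Icc.2 hab.le) (Ioo_subset_Icc_self hx) hx.1
  have := hE_mono (left_mem_Icc.2 hab.le) (right_mem_Icc.2 hab.le) hab
  simp only [E, sub_self] at this
  linarith

theorem hasDerivAt_const_mul_rpow {c p q x : ℝ} (hq : q = p - 1) (h : x ≠ 0 ∨ 1 ≤ p) :
    HasDerivAt (fun y => c * y ^ p) (c * p * x ^ q) x := by
  simpa [hq, mul_assoc] using (Real.hasDerivAt_rpow_const h).const_mul c

theorem stmt_6 (γ : ℝ) (hγ0 : 0 < γ) (hγ1 : γ < 1) (k : ℕ) :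
    (2 / 3) * (3 - γ) * (2 - γ) * (1 - γ) * ((k : ℝ) + 1) ^ (-γ)
        < -8 * (((k : ℝ) + 1) ^ (3 - γ) - (k : ℝ) ^ (3 - γ))
            + 4 * (3 - γ) * (((k : ℝ) + 1) ^ (2 - γ) + (k : ℝ) ^ (2 - γ)) ∧
    0 < -8 * (((k : ℝ) + 1) ^ (3 - γ) - (k : ℝ) ^ (3 - γ))
            + 4 * (3 - γ) * (((k : ℝ) + 1) ^ (2 - γ) + (k : ℝ) ^ (2 - γ)) := by
  set C := (3 - γ) * (2 - γ) * (1 - γ)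
  have hC : 0 < C := by
    have : 0 < 1 - γ := by linarith
    have : 0 < 2 - γ := by linarith
    have : 0 < 3 - γ := by linarith
    positivity
  have hpos : 0 < C * ((k : ℝ) + 1) ^ (-γ) := by positivity
  -- The factors `1 *` let every derivative come from `hasDerivAt_const_mul_rpow`.
  have key := mul_cube_div_twelve_lt_trapezoid_error (a := k) (b := k + 1)
    (m := C * ((k : ℝ) + 1) ^ (-γ)) (f := fun x => 1 * x ^ (3 - γ))
    (f' := fun x => 1 * (3 - γ) * x ^ (2 - γ))
    (f'' := fun x => 1 * (3 - γ) * (2 - γ) * x ^ (1 - γ))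
    (f''' := fun x => 1 * (3 - γ) * (2 - γ) * (1 - γ) * x ^ (-γ)) (lt_add_one _)
    (fun x _ => hasDerivAt_const_mul_rpow (by ring) (Or.inr (by linarith)))
    (fun x _ => hasDerivAt_const_mul_rpow (by ring) (Or.inr (by linarith)))
    (by fun_prop (disch := linarith))
    (fun x hx => hasDerivAt_const_mul_rpow (by ring) (Or.inl (by linarith [hx.1])))
    (fun x hx => by
      have hx0 : 0 < x := by linarith [hx.1]
      simpa [C] using mul_lt_mul_of_pos_left
        (Real.rpow_lt_rpow_of_neg hx0 hx.2 (neg_lt_zero.2 hγ0)) hC)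
  simp only [add_sub_cancel_left, one_pow, one_mul, mul_one] at key
  constructor <;> linarith
end

section
/- For 0 < γ < 1 and every integer i ≥ 1, the coefficient m_i = 4((i+1)^{3-γ} - (i-1)^{3-γ}) - (3-γ)((i+1)^{2-γ} + 6 i^{2-γ} + (i-1)^{2-γ}) satisfies m_i ≥ 2(3-γ)(2-γ)(1-γ) i^{-γ} (1/6 - 7/60) > 0. -/
/-!
Put `a = i`, `p = 3 - γ` and
`Φ(t) = 4((a+t)^p - (a-t)^p) - p t ((a+t)^(p-1) + 6a^(p-1) + (a-t)^(p-1))`, so that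
`m_i = Φ(1)`. Then `Φ(0) = Φ'(0) = Φ''(0) = 0` and, with `K = (3-γ)(2-γ)(1-γ)`,
`Φ'''(t) = K((a+t)^(-γ) + (a-t)^(-γ) + γ t ((a+t)^(-γ-1) - (a-t)^(-γ-1))) ≥ K (a+t)^(-γ)`
as long as `(1+γ) t ≤ a`. Hence `m_i ≥ K (a+1)^(-γ) / 6 ≥ K a^(-γ) / 10` for `a ≥ 2`.
For `i = 1` the stencil reaches the singularity at `0`; there `m_1 = 2(6-s)2^s - 6(2+s)` with
`s = 1 - γ`, and the quadratic lower bound for `2^s = exp (s log 2)` suffices.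
-/

open Real Set

theorem le_of_hasDerivAt_le {f g f' g' : ℝ → ℝ} {a b : ℝ} (ha : g a ≤ f a)
    (hf : ∀ t ∈ Icc a b, HasDerivAt f (f' t) t) (hg : ∀ t ∈ Icc a b, HasDerivAt g (g' t) t)
    (hle : ∀ t ∈ Icc a b, g' t ≤ f' t) : ∀ t ∈ Icc a b, g t ≤ f t := by
  have hd : ∀ t ∈ Icc a b, HasDerivAt (f - g) (f' t - g' t) t :=
    fun t ht => (hf t ht).sub (hg t ht)
  have hmono : MonotoneOn (f - g) (Icc a b) :=
    monotoneOn_of_hasDerivWithinAt_nonneg (f' := f' - g') (convex_Icc a b)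
      (fun t ht => (hd t ht).continuousAt.continuousWithinAt)
      (fun t ht => (hd t (interior_subset ht)).hasDerivWithinAt)
      (fun t ht => sub_nonneg.2 (hle t (interior_subset ht)))
  intro t ht
  have := hmono (left_mem_Icc.2 (ht.1.trans ht.2)) ht ht.1
  simp only [Pi.sub_apply] at this
  linarith

theorem mul_cube_div_six_le_of_hasDerivAt {F F₁ F₂ F₃ : ℝ → ℝ} {b c : ℝ}
    (h₀ : F 0 = 0) (h₁ : F₁ 0 = 0) (h₂ : F₂ 0 = 0)
    (hF : ∀ t ∈ Icc 0 b, HasDerivAt F (F₁ t) t)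
    (hF₁ : ∀ t ∈ Icc 0 b, HasDerivAt F₁ (F₂ t) t)
    (hF₂ : ∀ t ∈ Icc 0 b, HasDerivAt F₂ (F₃ t) t)
    (hc : ∀ t ∈ Icc 0 b, c ≤ F₃ t) (hb : 0 ≤ b) :
    c * b ^ 3 / 6 ≤ F b := by
  have e₂ := le_of_hasDerivAt_le (g := fun t => c * t) (by simp [h₂]) hF₂
    (fun t _ => (hasDerivAt_id t).const_mul c |>.congr_deriv (mul_one c)) hc
  have e₁ := le_of_hasDerivAt_le (g := fun t => c * t ^ 2 / 2) (by simp [h₁]) hF₁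
    (fun t _ => ((hasDerivAt_pow 2 t).const_mul c).div_const 2 |>.congr_deriv (by ring)) e₂
  have e₀ := le_of_hasDerivAt_le (g := fun t => c * t ^ 3 / 6) (by simp [h₀]) hF
    (fun t _ => ((hasDerivAt_pow 3 t).const_mul c).div_const 6 |>.congr_deriv (by ring)) e₁
  exact e₀ b ⟨hb, le_rfl⟩

noncomputable def symmPowSum (a q t : ℝ) : ℝ := (a + t) ^ q + (a - t) ^ q

noncomputable def symmPowDiff (a q t : ℝ) : ℝ := (a + t) ^ q - (a - t) ^ q

section
variable {a t : ℝ} (q : ℝ)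

theorem hasDerivAt_add_rpow (h : 0 < a + t) :
    HasDerivAt (fun s => (a + s) ^ q) (q * (a + t) ^ (q - 1)) t := by
  simpa using ((hasDerivAt_id t).const_add a).rpow_const (p := q) (Or.inl h.ne')

theorem hasDerivAt_sub_rpow (h : 0 < a - t) :
    HasDerivAt (fun s => (a - s) ^ q) (-(q * (a - t) ^ (q - 1))) t := by
  simpa using ((hasDerivAt_id t).const_sub a).rpow_const (p := q) (Or.inl h.ne')

theorem hasDerivAt_symmPowSum (h : |t| < a) :
    HasDerivAt (symmPowSum a q) (q * symmPowDiff a (q - 1) t) t := by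
  obtain ⟨h₁, h₂⟩ := abs_lt.1 h
  exact ((hasDerivAt_add_rpow q (by linarith)).add
    (hasDerivAt_sub_rpow q (by linarith))).congr_deriv (by rw [symmPowDiff]; ring)

theorem hasDerivAt_symmPowDiff (h : |t| < a) :
    HasDerivAt (symmPowDiff a q) (q * symmPowSum a (q - 1) t) t := by
  obtain ⟨h₁, h₂⟩ := abs_lt.1 h
  exact ((hasDerivAt_add_rpow q (by linarith)).sub
    (hasDerivAt_sub_rpow q (by linarith))).congr_deriv (by rw [symmPowSum]; ring)

end

/-- `m_i = nodeWeight (3 - γ) i 1`; the half-width `t` of the stencil is kept free so that the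
weight can be differentiated in it. -/
noncomputable def nodeWeight (p a t : ℝ) : ℝ :=
  4 * symmPowDiff a p t - p * t * (symmPowSum a (p - 1) t + 6 * a ^ (p - 1))

section
variable {a t : ℝ} (p : ℝ)

theorem hasDerivAt_nodeWeight (h : |t| < a) :
    HasDerivAt (nodeWeight p a)
      (3 * p * symmPowSum a (p - 1) t - 6 * p * a ^ (p - 1)
        - p * (p - 1) * t * symmPowDiff a (p - 2) t) t := by
  have hE := hasDerivAt_symmPowSum (p - 1) h
  rw [show p - 1 - 1 = p - 2 by ring] at hE
  have := ((hasDerivAt_symmPowDiff p h).const_mul 4).sub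
    ((((hasDerivAt_id t).const_mul p).mul (hE.add_const (6 * a ^ (p - 1)))))
  exact this.congr_deriv (by simp only [id]; ring)

theorem hasDerivAt_deriv_nodeWeight (h : |t| < a) :
    HasDerivAt (fun s => 3 * p * symmPowSum a (p - 1) s - 6 * p * a ^ (p - 1)
        - p * (p - 1) * s * symmPowDiff a (p - 2) s)
      (2 * p * (p - 1) * symmPowDiff a (p - 2) t
        - p * (p - 1) * (p - 2) * t * symmPowSum a (p - 3) t) t := by
  have hE := hasDerivAt_symmPowSum (p - 1) h
  have hO := hasDerivAt_symmPowDiff (p - 2) h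
  rw [show p - 1 - 1 = p - 2 by ring] at hE
  rw [show p - 2 - 1 = p - 3 by ring] at hO
  have := ((hE.const_mul (3 * p)).sub_const (6 * p * a ^ (p - 1))).sub
    (((hasDerivAt_id t).const_mul (p * (p - 1))).mul hO)
  exact this.congr_deriv (by simp only [id]; ring)

theorem hasDerivAt_deriv2_nodeWeight (h : |t| < a) :
    HasDerivAt (fun s => 2 * p * (p - 1) * symmPowDiff a (p - 2) s
        - p * (p - 1) * (p - 2) * s * symmPowSum a (p - 3) s)
      (p * (p - 1) * (p - 2) *
        (symmPowSum a (p - 3) t - (p - 3) * t * symmPowDiff a (p - 4) t)) t := by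
  have hO := hasDerivAt_symmPowDiff (p - 2) h
  have hE := hasDerivAt_symmPowSum (p - 3) h
  rw [show p - 2 - 1 = p - 3 by ring] at hO
  rw [show p - 3 - 1 = p - 4 by ring] at hE
  have := (hO.const_mul (2 * p * (p - 1))).sub
    (((hasDerivAt_id t).const_mul (p * (p - 1) * (p - 2))).mul hE)
  exact this.congr_deriv (by simp only [id]; ring)

end

theorem rpow_neg_le_symmPowSum_add {γ a t : ℝ} (hγ : 0 ≤ γ) (ht : 0 ≤ t) (hta : t < a)
    (h : (1 + γ) * t ≤ a) :
    (a + t) ^ (-γ) ≤ symmPowSum a (-γ) t + γ * t * symmPowDiff a (-γ - 1) t := by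
  have hsub : (a - t) ^ (-γ) = (a - t) ^ (-γ - 1) * (a - t) := by
    rw [rpow_sub_one (by linarith), div_mul_cancel₀ _ (by linarith)]
  have hplus : 0 ≤ (a + t) ^ (-γ - 1) := rpow_nonneg (by linarith) _
  have hminus : 0 ≤ (a - t) ^ (-γ - 1) := rpow_nonneg (by linarith) _
  rw [symmPowSum, symmPowDiff, hsub]
  nlinarith [mul_nonneg (mul_nonneg hγ ht) hplus,
    mul_nonneg hminus (show 0 ≤ a - t - γ * t by linarith)]

theorem div_add_one_mul_rpow_neg_le {γ a : ℝ} (hγ : γ ≤ 1) (ha : 0 < a) :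
    a / (a + 1) * a ^ (-γ) ≤ (a + 1) ^ (-γ) := by
  have hsplit : (a + 1) ^ (-γ) = ((a + 1) / a) ^ (-γ) * a ^ (-γ) := by
    rw [← mul_rpow (by positivity) ha.le, div_mul_cancel₀ _ ha.ne']
  have hbase : 1 ≤ (a + 1) / a := by rw [le_div_iff₀ ha]; linarith
  have hexp : ((a + 1) / a) ^ (-1 : ℝ) ≤ ((a + 1) / a) ^ (-γ) :=
    rpow_le_rpow_of_exponent_le hbase (by linarith)
  rw [rpow_neg_one, inv_div] at hexp
  rw [hsplit]
  exact mul_le_mul_of_nonneg_right hexp (rpow_nonneg ha.le _)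

theorem mul_rpow_neg_div_six_le_nodeWeight {γ a : ℝ} (hγ₀ : 0 < γ) (hγ₁ : γ ≤ 1)
    (ha : 1 + γ ≤ a) :
    (3 - γ) * (2 - γ) * (1 - γ) * (a + 1) ^ (-γ) / 6 ≤ nodeWeight (3 - γ) a 1 := by
  have habs : ∀ t ∈ Icc (0 : ℝ) 1, |t| < a := fun t ht => by
    rw [abs_of_nonneg ht.1]; linarith [ht.2]
  have hK : 0 ≤ (3 - γ) * (2 - γ) * (1 - γ) := by
    apply mul_nonneg (mul_nonneg _ _) <;> linarith
  have := mul_cube_div_six_le_of_hasDerivAt (b := 1)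
    (c := (3 - γ) * (2 - γ) * (1 - γ) * (a + 1) ^ (-γ))
    (by simp [nodeWeight, symmPowDiff])
    (by rw [symmPowSum]; simp only [add_zero, sub_zero, mul_zero, zero_mul]; ring)
    (by simp [symmPowDiff])
    (fun t ht => hasDerivAt_nodeWeight (3 - γ) (habs t ht))
    (fun t ht => hasDerivAt_deriv_nodeWeight (3 - γ) (habs t ht))
    (fun t ht => hasDerivAt_deriv2_nodeWeight (3 - γ) (habs t ht)) ?_ zero_le_one
  · simpa using this
  rintro t ⟨ht₀, ht₁⟩
  have hmono : (a + 1) ^ (-γ) ≤ (a + t) ^ (-γ) :=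
    rpow_le_rpow_of_nonpos (by linarith) (by linarith) (by linarith)
  have hlow := rpow_neg_le_symmPowSum_add (a := a) hγ₀.le ht₀ (by linarith) (by nlinarith)
  rw [show (3 : ℝ) - γ - 1 = 2 - γ by ring, show (3 : ℝ) - γ - 2 = 1 - γ by ring,
    show (3 : ℝ) - γ - 3 = -γ by ring, show (3 : ℝ) - γ - 4 = -γ - 1 by ring]
  exact mul_le_mul_of_nonneg_left (hmono.trans (hlow.trans_eq (by ring))) hK

theorem mul_div_ten_le_nodeWeight_one_one {γ : ℝ} (hγ₀ : 0 ≤ γ) (hγ₁ : γ ≤ 1) :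
    (3 - γ) * (2 - γ) * (1 - γ) / 10 ≤ nodeWeight (3 - γ) 1 1 := by
  set s := 1 - γ
  have hs₀ : 0 ≤ s := by linarith
  have hpow : ∀ n : ℕ, (2 : ℝ) ^ (n + s) = 2 ^ n * 2 ^ s := fun n => by
    rw [rpow_add two_pos, rpow_natCast]
  have hnode : nodeWeight (3 - γ) 1 1 = 2 * (6 - s) * 2 ^ s - 6 * (2 + s) := by
    have h3 := hpow 2
    have h2 := hpow 1
    push_cast at h3 h2
    rw [nodeWeight, symmPowDiff, symmPowSum, show (3 : ℝ) - γ = 2 + s by ring,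
      show (2 : ℝ) + s - 1 = 1 + s by ring, sub_self, zero_rpow (by linarith),
      zero_rpow (by linarith), one_rpow, one_add_one_eq_two, h3, h2]
    ring
  have hexp : 1 + s * log 2 + (s * log 2) ^ 2 / 2 ≤ (2 : ℝ) ^ s := by
    rw [rpow_def_of_pos two_pos, mul_comm (log 2)]
    exact quadratic_le_exp_of_nonneg (mul_nonneg hs₀ (log_pos one_lt_two).le)
  have hq : 1 + s * 0.69 + (s * 0.69) ^ 2 / 2 ≤ (2 : ℝ) ^ s := by
    have hL : s * 0.69 ≤ s * log 2 :=
      mul_le_mul_of_nonneg_left (by linarith [log_two_gt_d9]) hs₀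
    nlinarith [mul_nonneg hs₀ (by norm_num : (0 : ℝ) ≤ 0.69)]
  rw [hnode, show (3 : ℝ) - γ = 2 + s by ring, show (2 : ℝ) - γ = 1 + s by ring]
  nlinarith [mul_le_mul_of_nonneg_left hq (show (0 : ℝ) ≤ 6 - s by linarith),
    mul_nonneg (mul_nonneg hs₀ hs₀) (show (0 : ℝ) ≤ 1 - s by linarith)]

theorem stmt_7 (γ : ℝ) (hγ0 : 0 < γ) (hγ1 : γ < 1) (i : ℕ) (hi : 1 ≤ i) :
    2 * (3 - γ) * (2 - γ) * (1 - γ) * (i : ℝ) ^ (-γ) * (1/6 - 7/60)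
        ≤ 4 * (((i : ℝ) + 1) ^ (3 - γ) - ((i : ℝ) - 1) ^ (3 - γ))
            - (3 - γ) * (((i : ℝ) + 1) ^ (2 - γ) + 6 * (i : ℝ) ^ (2 - γ)
                + ((i : ℝ) - 1) ^ (2 - γ)) ∧
    0 < 2 * (3 - γ) * (2 - γ) * (1 - γ) * (i : ℝ) ^ (-γ) * (1/6 - 7/60) := by
  have hK : 0 < (3 - γ) * (2 - γ) * (1 - γ) := by
    apply mul_pos (mul_pos _ _) <;> linarith
  have hi₀ : (0 : ℝ) < i := by exact_mod_cast hi
  have hm : 4 * (((i : ℝ) + 1) ^ (3 - γ) - ((i : ℝ) - 1) ^ (3 - γ))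
      - (3 - γ) * (((i : ℝ) + 1) ^ (2 - γ) + 6 * (i : ℝ) ^ (2 - γ)
          + ((i : ℝ) - 1) ^ (2 - γ))
      = nodeWeight (3 - γ) i 1 := by
    rw [nodeWeight, symmPowDiff, symmPowSum, show (3 : ℝ) - γ - 1 = 2 - γ by ring]
    ring
  refine ⟨?_, by have := mul_pos hK (rpow_pos_of_pos hi₀ (-γ)); linarith⟩
  rw [hm]
  rcases hi.eq_or_lt with rfl | hi₂
  · rw [Nat.cast_one, one_rpow]
    linarith [mul_div_ten_le_nodeWeight_one_one hγ0.le hγ1.le]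
  have ha : (2 : ℝ) ≤ i := by exact_mod_cast hi₂
  have hratio : (3 / 5 : ℝ) ≤ i / (i + 1) := by
    rw [le_div_iff₀ (by linarith)]
    linarith
  calc 2 * (3 - γ) * (2 - γ) * (1 - γ) * (i : ℝ) ^ (-γ) * (1 / 6 - 7 / 60)
      = (3 - γ) * (2 - γ) * (1 - γ) * (3 / 5 * (i : ℝ) ^ (-γ)) / 6 := by ring
    _ ≤ (3 - γ) * (2 - γ) * (1 - γ) * (i / (i + 1) * (i : ℝ) ^ (-γ)) / 6 := by gcongr
    _ ≤ (3 - γ) * (2 - γ) * (1 - γ) * ((i + 1) ^ (-γ)) / 6 := by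
      gcongr
      exact div_add_one_mul_rpow_neg_le hγ1.le hi₀
    _ ≤ nodeWeight (3 - γ) i 1 := mul_rpow_neg_div_six_le_nodeWeight hγ0 hγ1.le (by linarith)
end

section
/- For 0 < γ < 1 and every real z ≥ 3/2, the quantity n(z) := -8(z+1)^{3-γ}(1 - (1 - 1/(z+1))^{3-γ}) + 4(3-γ)(z+1)^{2-γ}(1 + (1 - 1/(z+1))^{2-γ}) satisfies n(z) ≥ (2/3)(3-γ)(2-γ)(1-γ)(z+1)^{-γ} > 0. -/
noncomputable def auxF (γ s : ℝ) : ℝ :=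
  (3 - γ) / 2 * ((1 - s) * (1 + s ^ (2 - γ))) - 1 + s ^ (3 - γ)
    - ((3 - γ) * (2 - γ) * (1 - γ) / 12) * (1 - s) ^ 3

noncomputable def auxF' (γ s : ℝ) : ℝ :=
  (3 - γ) / 2 * (s ^ (2 - γ) - 1 + (2 - γ) * ((1 - s) * s ^ (1 - γ)))
    + 3 * ((3 - γ) * (2 - γ) * (1 - γ) / 12) * (1 - s) ^ 2

noncomputable def auxF'' (γ s : ℝ) : ℝ :=
  ((3 - γ) * (2 - γ) * (1 - γ) / 2) * (1 - s) * (s ^ (-γ) - 1)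

lemma hasDerivAt_auxF (γ : ℝ) {s : ℝ} (hs : 0 < s) :
    HasDerivAt (auxF γ) (auxF' γ s) s := by
  have hB : HasDerivAt (fun x : ℝ => x ^ (2 - γ)) ((2 - γ) * s ^ (1 - γ)) s := by
    have := Real.hasDerivAt_rpow_const (x := s) (p := 2 - γ) (Or.inl hs.ne')
    rw [show (1 : ℝ) - γ = 2 - γ - 1 by ring]; exact this
  have hA : HasDerivAt (fun x : ℝ => x ^ (3 - γ)) ((3 - γ) * s ^ (2 - γ)) s := by
    have := Real.hasDerivAt_rpow_const (x := s) (p := 3 - γ) (Or.inl hs.ne')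
    rw [show (2 : ℝ) - γ = 3 - γ - 1 by ring]; exact this
  have h1 : HasDerivAt (fun x : ℝ => 1 - x) (-1) s := by
    simpa using (hasDerivAt_id s).const_sub 1
  have h2 : HasDerivAt (fun x : ℝ => 1 + x ^ (2 - γ)) ((2 - γ) * s ^ (1 - γ)) s :=
    hB.const_add 1
  have h3 : HasDerivAt (fun x : ℝ => (1 - x) * (1 + x ^ (2 - γ)))
      ((-1) * (1 + s ^ (2 - γ)) + (1 - s) * ((2 - γ) * s ^ (1 - γ))) s := h1.mul h2
  have h4 : HasDerivAt (fun x : ℝ => (1 - x) ^ 3) (3 * (1 - s) ^ 2 * (-1)) s := by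
    simpa using h1.fun_pow 3
  have h := ((((h3.const_mul ((3 - γ) / 2)).sub_const 1).fun_add hA).fun_sub
    (h4.const_mul ((3 - γ) * (2 - γ) * (1 - γ) / 12)))
  refine h.congr_deriv ?_
  simp only [auxF']; ring

lemma hasDerivAt_auxF' (γ : ℝ) {s : ℝ} (hs : 0 < s) :
    HasDerivAt (auxF' γ) (auxF'' γ s) s := by
  have hB : HasDerivAt (fun x : ℝ => x ^ (2 - γ)) ((2 - γ) * s ^ (1 - γ)) s := by
    have := Real.hasDerivAt_rpow_const (x := s) (p := 2 - γ) (Or.inl hs.ne')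
    rw [show (1 : ℝ) - γ = 2 - γ - 1 by ring]; exact this
  have hC : HasDerivAt (fun x : ℝ => x ^ (1 - γ)) ((1 - γ) * s ^ (-γ)) s := by
    have := Real.hasDerivAt_rpow_const (x := s) (p := 1 - γ) (Or.inl hs.ne')
    rw [show -γ = 1 - γ - 1 by ring]; exact this
  have h1 : HasDerivAt (fun x : ℝ => 1 - x) (-1) s := by
    simpa using (hasDerivAt_id s).const_sub 1
  have h3 : HasDerivAt (fun x : ℝ => (1 - x) * x ^ (1 - γ))
      ((-1) * s ^ (1 - γ) + (1 - s) * ((1 - γ) * s ^ (-γ))) s := h1.mul hC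
  have h4 : HasDerivAt (fun x : ℝ => (1 - x) ^ 2) (2 * (1 - s) ^ 1 * (-1)) s := by
    simpa using h1.fun_pow 2
  have h := (((hB.sub_const 1).fun_add (h3.const_mul (2 - γ))).const_mul ((3 - γ) / 2)).fun_add
    (h4.const_mul (3 * ((3 - γ) * (2 - γ) * (1 - γ) / 12)))
  refine h.congr_deriv ?_
  simp only [auxF'']; ring

lemma auxF_nonneg (γ : ℝ) (hγ0 : 0 < γ) (hγ1 : γ < 1) {s : ℝ}
    (hs : s ∈ Set.Icc (3/5 : ℝ) 1) : 0 ≤ auxF γ s := by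
  have hpos : ∀ x ∈ Set.Icc (3/5 : ℝ) 1, (0 : ℝ) < x := fun x hx => lt_of_lt_of_le (by norm_num) hx.1
  have hint : interior (Set.Icc (3/5 : ℝ) 1) = Set.Ioo (3/5 : ℝ) 1 := interior_Icc
  -- F' is monotone
  have contF' : ContinuousOn (auxF' γ) (Set.Icc (3/5 : ℝ) 1) := fun x hx =>
    ((hasDerivAt_auxF' γ (hpos x hx)).continuousAt).continuousWithinAt
  have monoF' : MonotoneOn (auxF' γ) (Set.Icc (3/5 : ℝ) 1) := by
    apply monotoneOn_of_deriv_nonneg (convex_Icc _ _) contF'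
    · intro x hx
      rw [hint] at hx
      exact ((hasDerivAt_auxF' γ (lt_trans (by norm_num) hx.1)).differentiableAt).differentiableWithinAt
    · intro x hx
      rw [hint] at hx
      have hx0 : (0 : ℝ) < x := lt_trans (by norm_num) hx.1
      rw [(hasDerivAt_auxF' γ hx0).deriv]
      have h1 : (1 : ℝ) ≤ x ^ (-γ) :=
        Real.one_le_rpow_of_pos_of_le_one_of_nonpos hx0 hx.2.le (by linarith)
      have hc : (0 : ℝ) ≤ (3 - γ) * (2 - γ) * (1 - γ) / 2 := by
        have := mul_pos (mul_pos (by linarith : (0:ℝ) < 3 - γ)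
          (by linarith : (0:ℝ) < 2 - γ)) (by linarith : (0:ℝ) < 1 - γ)
        linarith
      have : (0 : ℝ) ≤ 1 - x := by linarith [hx.2]
      unfold auxF''
      have := mul_nonneg (mul_nonneg hc this) (by linarith : (0:ℝ) ≤ x ^ (-γ) - 1)
      linarith [this]
  have hF'1 : auxF' γ 1 = 0 := by
    simp [auxF']
  have hF'nonpos : ∀ x ∈ Set.Icc (3/5 : ℝ) 1, auxF' γ x ≤ 0 := fun x hx => by
    have := monoF' hx (Set.right_mem_Icc.mpr (by norm_num)) hx.2
    linarith [hF'1 ▸ this]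
  -- F is antitone
  have contF : ContinuousOn (auxF γ) (Set.Icc (3/5 : ℝ) 1) := fun x hx =>
    ((hasDerivAt_auxF γ (hpos x hx)).continuousAt).continuousWithinAt
  have antiF : AntitoneOn (auxF γ) (Set.Icc (3/5 : ℝ) 1) := by
    apply antitoneOn_of_deriv_nonpos (convex_Icc _ _) contF
    · intro x hx
      rw [hint] at hx
      exact ((hasDerivAt_auxF γ (lt_trans (by norm_num) hx.1)).differentiableAt).differentiableWithinAt
    · intro x hx
      rw [hint] at hx
      rw [(hasDerivAt_auxF γ (lt_trans (by norm_num) hx.1)).deriv]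
      exact hF'nonpos x (Set.mem_Icc.mpr ⟨hx.1.le, hx.2.le⟩)
  have hF1 : auxF γ 1 = 0 := by simp [auxF]
  have := antiF hs (Set.right_mem_Icc.mpr (by norm_num)) hs.2
  linarith [hF1 ▸ this]

theorem stmt_8 (γ z : ℝ) (hγ0 : 0 < γ) (hγ1 : γ < 1) (hz : 3/2 ≤ z) :
    (2 / 3) * (3 - γ) * (2 - γ) * (1 - γ) * (z + 1) ^ (-γ)
        ≤ -8 * (z + 1) ^ (3 - γ) * (1 - (1 - 1 / (z + 1)) ^ (3 - γ))
            + 4 * (3 - γ) * (z + 1) ^ (2 - γ) * (1 + (1 - 1 / (z + 1)) ^ (2 - γ)) ∧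
    0 < (2 / 3) * (3 - γ) * (2 - γ) * (1 - γ) * (z + 1) ^ (-γ) := by
  have hw : (0 : ℝ) < z + 1 := by linarith
  have hwpow : (0 : ℝ) < (z + 1) ^ (-γ) := Real.rpow_pos_of_pos hw _
  constructor
  · set s : ℝ := 1 - 1 / (z + 1) with hs_def
    have hs_mem : s ∈ Set.Icc (3/5 : ℝ) 1 := by
      constructor
      · have h1 : 1 / (z + 1) ≤ 1 / (5/2 : ℝ) := by
          apply one_div_le_one_div_of_le <;> linarith
        rw [hs_def]; norm_num at h1 ⊢; linarith
      · have : 0 < 1 / (z + 1) := by positivity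
        rw [hs_def]; linarith
    have key := auxF_nonneg γ hγ0 hγ1 hs_mem
    have hApos : (0 : ℝ) < (z + 1) ^ (3 - γ) := Real.rpow_pos_of_pos hw _
    -- identities
    have e1 : (z + 1) ^ (2 - γ) = (z + 1) ^ (3 - γ) * (1 - s) := by
      rw [show (2 : ℝ) - γ = 3 - γ - 1 by ring, Real.rpow_sub hw, Real.rpow_one,
        hs_def]
      field_simp
      ring
    have e2 : (z + 1) ^ (-γ) = (z + 1) ^ (3 - γ) * (1 - s) ^ 3 := by
      rw [show -γ = 3 - γ - 3 by ring, Real.rpow_sub hw, hs_def]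
      rw [show ((3:ℝ)) = ((3:ℕ):ℝ) by norm_num, Real.rpow_natCast]
      field_simp
      ring
    have hmul : 0 ≤ (z + 1) ^ (3 - γ) * auxF γ s := mul_nonneg hApos.le key
    unfold auxF at hmul
    rw [e1, e2]
    nlinarith [hmul]
  · have h1 : (0:ℝ) < 3 - γ := by linarith
    have h2 : (0:ℝ) < 2 - γ := by linarith
    have h3 : (0:ℝ) < 1 - γ := by linarith
    positivity
end

section
/- Let u ∈ C²[a,b], 0 < γ < 1, and let I₁(a,b,x_i) be the value obtained by replacing u in I(a,b,x_i) = ∫ₐᵇ u(y)/|x_i − y|^γ dy by its piecewise linear interpolant on a uniform grid of step h. Then |I(a,b,x_i) − I₁(a,b,x_i)| ≤ C h² for a constant C depending only on ‖u″‖_∞, γ, and b−a. -/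
/-!
On every cell the linear interpolant is a convex combination of the first-order Taylor
expansions of `u` about the evaluation point; their remainders are `O(h²)` because `u'` is
Lipschitz on `[a, b]`, so `|u - uL| ≤ M h²` there. The kernel `|xᵢ - y| ^ (-γ)` is nonnegative
and, as `γ < 1`, integrable, so the two weighted integrals differ by at most
`M h² ∫ₐᵇ |xᵢ - y| ^ (-γ) dy ≤ M h² ∫_{-(b-a)}^{b-a} |s| ^ (-γ) ds`.
-/

open Set MeasureTheory intervalIntegral
open scoped NNReal

theorem Convex.abs_sub_sub_mul_le_of_lipschitzOnWith {s : Set ℝ} (hs : Convex ℝ s)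
    {u u' : ℝ → ℝ} {M : ℝ≥0} (hu : ∀ x ∈ s, HasDerivWithinAt u (u' x) s x)
    (hu' : LipschitzOnWith M u' s) {x y : ℝ} (hx : x ∈ s) (hy : y ∈ s) :
    |u x - u y - u' y * (x - y)| ≤ M * (x - y) ^ 2 := by
  have hsub : uIcc y x ⊆ s := hs.ordConnected.uIcc_subset hy hx
  set g : ℝ → ℝ := fun t => u t - u' y * t
  have hg : ∀ t ∈ uIcc y x, HasDerivWithinAt g (u' t - u' y) (uIcc y x) t := fun t ht => by
    have := ((hu t (hsub ht)).mono hsub).sub ((hasDerivWithinAt_id t _).const_mul (u' y))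
    rwa [mul_one] at this
  have hg' : ∀ t ∈ uIcc y x, ‖u' t - u' y‖ ≤ M * |x - y| := fun t ht =>
    calc ‖u' t - u' y‖ ≤ M * |t - y| := by
          simpa [Real.dist_eq] using hu'.dist_le_mul t (hsub ht) y hy
      _ ≤ M * |x - y| := mul_le_mul_of_nonneg_left (abs_sub_left_of_mem_uIcc ht) M.2
  calc |u x - u y - u' y * (x - y)| = ‖g x - g y‖ := by
        rw [Real.norm_eq_abs]; congr 1; ring
    _ ≤ M * |x - y| * ‖x - y‖ :=
        (convex_uIcc y x).norm_image_sub_le_of_norm_hasDerivWithin_le hg hg'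
          left_mem_uIcc right_mem_uIcc
    _ = M * (x - y) ^ 2 := by rw [Real.norm_eq_abs, mul_assoc, abs_mul_abs_self, sq]

theorem abs_sub_linear_interp_le {u u' : ℝ → ℝ} {M : ℝ≥0} {p q y : ℝ} (hpq : p < q)
    (hu : ∀ x ∈ Icc p q, HasDerivWithinAt u (u' x) (Icc p q) x)
    (hu' : LipschitzOnWith M u' (Icc p q)) (hy : y ∈ Icc p q) :
    |u y - (u p * (q - y) / (q - p) + u q * (y - p) / (q - p))| ≤ M * ((y - p) * (q - y)) := by
  have hqp : 0 < q - p := sub_pos.2 hpq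
  have hp := (convex_Icc p q).abs_sub_sub_mul_le_of_lipschitzOnWith hu hu'
    (left_mem_Icc.2 hpq.le) hy
  have hq := (convex_Icc p q).abs_sub_sub_mul_le_of_lipschitzOnWith hu hu'
    (right_mem_Icc.2 hpq.le) hy
  rw [show u y - (u p * (q - y) / (q - p) + u q * (y - p) / (q - p)) =
      -((q - y) * (u p - u y - u' y * (p - y)) + (y - p) * (u q - u y - u' y * (q - y))) /
        (q - p) by field_simp; ring,
    abs_div, abs_neg, abs_of_pos hqp, div_le_iff₀ hqp]
  calc _ ≤ (q - y) * |u p - u y - u' y * (p - y)|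
        + (y - p) * |u q - u y - u' y * (q - y)| := by
        refine (abs_add_le _ _).trans_eq ?_
        rw [abs_mul, abs_mul, abs_of_nonneg (sub_nonneg.2 hy.2), abs_of_nonneg (sub_nonneg.2 hy.1)]
    _ ≤ (q - y) * (M * (p - y) ^ 2) + (y - p) * (M * (q - y) ^ 2) := by
        gcongr
        · exact sub_nonneg.2 hy.2
        · exact sub_nonneg.2 hy.1
    _ = M * ((y - p) * (q - y)) * (q - p) := by ring

theorem exists_lt_mem_Icc_succ {X : ℕ → ℝ} {N : ℕ} (hN : 0 < N) {y : ℝ}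
    (hy : y ∈ Icc (X 0) (X N)) : ∃ m < N, y ∈ Icc (X m) (X (m + 1)) := by
  induction N with
  | zero => omega
  | succ n ih =>
    by_cases hyn : 0 < n ∧ y ≤ X n
    · obtain ⟨m, hm, hym⟩ := ih hyn.1 ⟨hy.1, hyn.2⟩
      exact ⟨m, by omega, hym⟩
    · refine ⟨n, n.lt_succ_self, ?_, hy.2⟩
      rcases n.eq_zero_or_pos with rfl | hn
      · exact hy.1
      · exact (not_le.1 fun h => hyn ⟨hn, h⟩).le

theorem intervalIntegrable_abs_rpow {r : ℝ} (hr : -1 < r) (a b : ℝ) :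
    IntervalIntegrable (fun s : ℝ => |s| ^ r) volume a b := by
  have hpos : ∀ t, 0 ≤ t → IntervalIntegrable (fun s : ℝ => |s| ^ r) volume 0 t := by
    intro t ht
    rw [intervalIntegrable_iff]
    refine (intervalIntegrable_iff.1 (intervalIntegrable_rpow' hr)).congr_fun
      (fun s hs => ?_) measurableSet_uIoc
    rw [uIoc_of_le ht] at hs
    simp only [abs_of_pos hs.1]
  have hall : ∀ t, IntervalIntegrable (fun s : ℝ => |s| ^ r) volume 0 t := fun t => by
    rcases le_total 0 t with ht | ht
    · exact hpos t ht
    · rw [IntervalIntegrable.iff_comp_neg]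
      simpa using hpos (-t) (neg_nonneg.2 ht)
  exact (hall a).symm.trans (hall b)

theorem intervalIntegrable_abs_sub_rpow {r : ℝ} (hr : -1 < r) (c a b : ℝ) :
    IntervalIntegrable (fun y : ℝ => |c - y| ^ r) volume a b := by
  simpa using (intervalIntegrable_abs_rpow hr (c - a) (c - b)).comp_sub_left c

theorem integral_abs_sub_rpow_le {r : ℝ} (hr : -1 < r) {a b c : ℝ} (hab : a ≤ b)
    (hc : c ∈ Icc a b) :
    ∫ y in a..b, |c - y| ^ r ≤ ∫ s in -(b - a)..(b - a), |s| ^ r := by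
  calc ∫ y in a..b, |c - y| ^ r ≤ ∫ y in (c - (b - a))..(c + (b - a)), |c - y| ^ r :=
        integral_mono_interval (by linarith [hc.2]) hab (by linarith [hc.1])
          (Filter.Eventually.of_forall fun y => by positivity)
          (intervalIntegrable_abs_sub_rpow hr c _ _)
    _ = ∫ s in -(b - a)..(b - a), |s| ^ r := by
        rw [integral_comp_sub_left (fun s => |s| ^ r)]; ring_nf

theorem abs_integral_mul_sub_integral_mul_le {f g K : ℝ → ℝ} {a b ε : ℝ} (hab : a ≤ b)
    (hf : IntervalIntegrable (fun y => f y * K y) volume a b)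
    (hg : IntervalIntegrable (fun y => g y * K y) volume a b)
    (hK : IntervalIntegrable K volume a b) (hK0 : ∀ y ∈ Icc a b, 0 ≤ K y)
    (hfg : ∀ y ∈ Icc a b, |f y - g y| ≤ ε) :
    |(∫ y in a..b, f y * K y) - ∫ y in a..b, g y * K y| ≤ ε * ∫ y in a..b, K y := by
  rw [← integral_sub hf hg, ← intervalIntegral.integral_const_mul]
  refine (abs_integral_le_integral_abs hab).trans
    (integral_mono_on hab (hf.sub hg).abs (hK.const_mul ε) fun y hy => ?_)
  rw [← sub_mul, abs_mul, abs_of_nonneg (hK0 y hy)]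
  exact mul_le_mul_of_nonneg_right (hfg y hy) (hK0 y hy)

def IsPiecewiseLinearInterpolant (u uL : ℝ → ℝ) (a h : ℝ) (N : ℕ) : Prop :=
  ∀ m : ℕ, m < N → ∀ y ∈ Icc (a + m * h) (a + (m + 1) * h),
    uL y = u (a + m * h) * ((a + (m + 1) * h) - y) / h
      + u (a + (m + 1) * h) * (y - (a + m * h)) / h

theorem Icc_cell_subset (a : ℝ) {h : ℝ} (hh : 0 ≤ h) {m N : ℕ} (hm : m < N) :
    Icc (a + m * h) (a + (m + 1) * h) ⊆ Icc a (a + N * h) := by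
  have hm' : (m : ℝ) + 1 ≤ N := by exact_mod_cast hm
  exact Icc_subset_Icc (by nlinarith) (by nlinarith)

namespace IsPiecewiseLinearInterpolant

variable {u uL : ℝ → ℝ} {a h : ℝ} {N : ℕ}

theorem abs_sub_le (huL : IsPiecewiseLinearInterpolant u uL a h N) (hh : 0 < h) (hN : 0 < N)
    {u' : ℝ → ℝ} {M : ℝ≥0}
    (hu : ∀ x ∈ Icc a (a + N * h), HasDerivWithinAt u (u' x) (Icc a (a + N * h)) x)
    (hu' : LipschitzOnWith M u' (Icc a (a + N * h))) {y : ℝ} (hy : y ∈ Icc a (a + N * h)) :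
    |u y - uL y| ≤ M * h ^ 2 := by
  obtain ⟨m, hm, hym⟩ :=
    exists_lt_mem_Icc_succ (X := fun m : ℕ => a + m * h) hN (by simpa using hy)
  push_cast at hym
  have hsub := Icc_cell_subset a hh.le hm
  have herr := abs_sub_linear_interp_le (by linarith) (fun x hx => (hu x (hsub hx)).mono hsub)
    (hu'.mono hsub) hym
  rw [show a + (m + 1) * h - (a + m * h) = h by ring] at herr
  rw [huL m hm y hym]
  refine herr.trans ?_
  gcongr
  nlinarith [hym.1, hym.2]

theorem intervalIntegrable_mul (huL : IsPiecewiseLinearInterpolant u uL a h N) (hh : 0 ≤ h)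
    {K : ℝ → ℝ} (hK : IntervalIntegrable K volume a (a + N * h)) :
    IntervalIntegrable (fun y => uL y * K y) volume a (a + N * h) := by
  have := IntervalIntegrable.trans_iterate (f := fun y => uL y * K y)
    (a := fun m : ℕ => a + m * h) (n := N) fun m hm => by
    push_cast
    have hcell : uIcc (a + m * h) (a + (m + 1) * h) = Icc (a + m * h) (a + (m + 1) * h) :=
      uIcc_of_le (by nlinarith)
    refine (hK.mono_set ?_).continuousOn_mul ?_
    · rw [hcell, uIcc_of_le (le_add_of_nonneg_right (by positivity))]
      exact Icc_cell_subset a hh hm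
    · rw [hcell]
      exact (Continuous.continuousOn (by fun_prop)).congr (huL m hm)
  simpa using this

end IsPiecewiseLinearInterpolant

theorem stmt_16_general (γ a b : ℝ) (hγ1 : γ < 1) (hab : a < b)
    (u : ℝ → ℝ) (hu : ContDiffOn ℝ 2 u (Set.Icc a b)) :
    ∃ C > 0, ∀ (N : ℕ) (hN : 1 ≤ N) (i : ℕ) (hi1 : 1 ≤ i) (hiN : i ≤ N - 1)
      (uL : ℝ → ℝ),
      (∀ m : ℕ, m < N → ∀ y ∈ Set.Icc (a + m * ((b - a) / N)) (a + (m + 1) * ((b - a) / N)),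
        uL y = u (a + m * ((b - a) / N)) * ((a + (m + 1) * ((b - a) / N)) - y) / ((b - a) / N)
             + u (a + (m + 1) * ((b - a) / N)) * (y - (a + m * ((b - a) / N))) / ((b - a) / N)) →
      |(∫ y in a..b, u y / |(a + i * ((b - a) / N)) - y| ^ γ)
          - ∫ y in a..b, uL y / |(a + i * ((b - a) / N)) - y| ^ γ|
        ≤ C * ((b - a) / N) ^ 2 := by
  have hu' : ∀ x ∈ Icc a b, HasDerivWithinAt u (derivWithin u (Icc a b) x) (Icc a b) x :=
    fun x hx => (hu.differentiableOn (by norm_num) x hx).hasDerivWithinAt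
  obtain ⟨M, hM⟩ := (hu.derivWithin (uniqueDiffOn_Icc hab) (by norm_num)).exists_lipschitzOnWith
    one_ne_zero (convex_Icc a b) isCompact_Icc
  have hγ : -1 < -γ := by linarith
  set W := ∫ s in -(b - a)..(b - a), |s| ^ (-γ)
  have hW : 0 ≤ W := integral_nonneg (by linarith) fun s _ => by positivity
  refine ⟨(M + 1) * (W + 1), by positivity, fun N hN i _ hiN uL huL => ?_⟩
  set h := (b - a) / N
  set c := a + i * h
  have hh : 0 < h := div_pos (by linarith) (by exact_mod_cast hN)
  have hb : a + N * h = b := by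
    simp only [h]; field_simp [show (N : ℝ) ≠ 0 by positivity]; ring
  have hc : c ∈ Icc a b :=
    hb ▸ Icc_cell_subset a hh.le (m := i) (by omega) ⟨le_rfl, by linarith⟩
  have hK := intervalIntegrable_abs_sub_rpow hγ c a b
  have huL' : IsPiecewiseLinearInterpolant u uL a h N := huL
  simp_rw [div_eq_mul_inv, ← Real.rpow_neg (abs_nonneg _)]
  calc _ ≤ M * h ^ 2 * ∫ y in a..b, |c - y| ^ (-γ) := by
        refine abs_integral_mul_sub_integral_mul_le hab.le
          (hK.continuousOn_mul (uIcc_of_le hab.le ▸ hu.continuousOn)) ?_ hK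
          (fun _ _ => by positivity) fun y hy => ?_
        · rw [← hb] at hK ⊢
          exact huL'.intervalIntegrable_mul hh.le hK
        · rw [← hb] at hu' hM hy
          exact huL'.abs_sub_le hh (by omega) hu' hM hy
    _ ≤ M * h ^ 2 * W := by gcongr; exact integral_abs_sub_rpow_le hγ hab.le hc
    _ ≤ (M + 1) * (W + 1) * h ^ 2 := by nlinarith [sq_nonneg h]

/-- Second-order local truncation error of piecewise linear collocation for the
weakly singular integral `∫ₐᵇ u(y)/|xᵢ − y|^γ dy`. -/
theorem stmt_16 (γ a b : ℝ) (hγ0 : 0 < γ) (hγ1 : γ < 1) (hab : a < b)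
    (u : ℝ → ℝ) (hu : ContDiffOn ℝ 2 u (Set.Icc a b)) :
    ∃ C > 0, ∀ (N : ℕ) (hN : 1 ≤ N) (i : ℕ) (hi1 : 1 ≤ i) (hiN : i ≤ N - 1)
      (uL : ℝ → ℝ),
      (∀ m : ℕ, m < N → ∀ y ∈ Set.Icc (a + m * ((b - a) / N)) (a + (m + 1) * ((b - a) / N)),
        uL y = u (a + m * ((b - a) / N)) * ((a + (m + 1) * ((b - a) / N)) - y) / ((b - a) / N)
             + u (a + (m + 1) * ((b - a) / N)) * (y - (a + m * ((b - a) / N))) / ((b - a) / N)) →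
      |(∫ y in a..b, u y / |(a + i * ((b - a) / N)) - y| ^ γ)
          - ∫ y in a..b, uL y / |(a + i * ((b - a) / N)) - y| ^ γ|
        ≤ C * ((b - a) / N) ^ 2 :=
  stmt_16_general γ a b hγ1 hab u hu
end

section
/- For 0 < γ < 1 and any half-integer z = i + 1/2 with integer i ≥ 1, the quantity p(z) := 4z^{3-γ}((1+1/z)^{3-γ} − (1−1/z)^{3-γ}) − (3-γ)z^{2-γ}((1+1/z)^{2-γ} + 6 + (1−1/z)^{2-γ}) satisfies p(z) ≥ (1/10)(3-γ)(2-γ)(1-γ) z^{-γ} > 0. -/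
/-!
With `α = 3 - γ` and `t = 1 / z`, the coefficient is `p(z) = z ^ α * colloc α t`. The Taylor
coefficients of `colloc α` at `0` vanish up to order two, and its third derivative is
`α (α - 1) (α - 2)` times a function `colloc₃ α` with `colloc₃ α 0 = 2` whose derivative
is at least `-56 t` on `[0, 2/3]`. Integrating `colloc₃ α t ≥ 2 - 28 t²` three times gives
`colloc α t ≥ α (α - 1) (α - 2) (t³/3 - 7 t⁵/15)`, and `t³/3 - 7 t⁵/15 ≥ t³/10` for
`t ≤ 2/3`, i.e. `z ≥ 3/2`.
-/

open Real Set

noncomputable def binomSum (p t : ℝ) : ℝ := (1 + t) ^ p + (1 - t) ^ p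

noncomputable def binomDiff (p t : ℝ) : ℝ := (1 + t) ^ p - (1 - t) ^ p

@[simp] lemma binomSum_zero (p : ℝ) : binomSum p 0 = 2 := by norm_num [binomSum]

@[simp] lemma binomDiff_zero (p : ℝ) : binomDiff p 0 = 0 := by simp [binomDiff]

section Binom

variable {p q t : ℝ}

lemma hasDerivAt_one_add_rpow (ht : 0 < 1 + t) :
    HasDerivAt (fun s => (1 + s) ^ p) (p * (1 + t) ^ (p - 1)) t := by
  simpa using ((hasDerivAt_id t).const_add 1).rpow_const (p := p) (Or.inl ht.ne')

lemma hasDerivAt_one_sub_rpow (ht : 0 < 1 - t) :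
    HasDerivAt (fun s => (1 - s) ^ p) (-(p * (1 - t) ^ (p - 1))) t := by
  simpa using ((hasDerivAt_id t).const_sub 1).rpow_const (p := p) (Or.inl ht.ne')

/- The exponent of the derivative is a separate variable `q`, so that it can be stated as
`α - 2` rather than `α - 1 - 1`. -/
lemma hasDerivAt_binomSum (hq : p - 1 = q) (h1 : 0 < 1 + t) (h2 : 0 < 1 - t) :
    HasDerivAt (binomSum p) (p * binomDiff q t) t := by
  subst hq
  exact ((hasDerivAt_one_add_rpow h1).add (hasDerivAt_one_sub_rpow h2)).congr_deriv
    (by rw [binomDiff]; ring)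

lemma hasDerivAt_binomDiff (hq : p - 1 = q) (h1 : 0 < 1 + t) (h2 : 0 < 1 - t) :
    HasDerivAt (binomDiff p) (p * binomSum q t) t := by
  subst hq
  exact ((hasDerivAt_one_add_rpow h1).sub (hasDerivAt_one_sub_rpow h2)).congr_deriv
    (by rw [binomSum]; ring)

end Binom

lemma binomSum_le_28 {p t : ℝ} (hp3 : -3 ≤ p) (hp0 : p ≤ 0) (ht : t ∈ Icc (0:ℝ) (2/3)) :
    binomSum p t ≤ 28 := by
  obtain ⟨ht0, ht1⟩ := ht
  have h1 : (1 + t) ^ p ≤ 1 := rpow_le_one_of_one_le_of_nonpos (by linarith) hp0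
  have h2 : (1 - t) ^ p ≤ 27 :=
    calc (1 - t) ^ p ≤ (1 - t) ^ (-3 : ℝ) :=
          rpow_le_rpow_of_exponent_ge (by linarith) (by linarith) hp3
      _ ≤ (1 / 3) ^ (-3 : ℝ) := rpow_le_rpow_of_nonpos (by norm_num) (by linarith) (by norm_num)
      _ = 27 := by norm_num [rpow_neg, rpow_natCast]
  rw [binomSum]; linarith

lemma image_le_of_hasDerivAt_le {f f' g g' : ℝ → ℝ} {a b : ℝ}
    (hf : ∀ x ∈ Icc a b, HasDerivAt f (f' x) x) (hg : ∀ x ∈ Icc a b, HasDerivAt g (g' x) x)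
    (ha : f a ≤ g a) (bound : ∀ x ∈ Ico a b, f' x ≤ g' x) :
    ∀ x ∈ Icc a b, f x ≤ g x :=
  image_le_of_deriv_right_le_deriv_boundary
    (fun x hx => (hf x hx).continuousAt.continuousWithinAt)
    (fun x hx => (hf x (Ico_subset_Icc_self hx)).hasDerivWithinAt) ha
    (fun x hx => (hg x hx).continuousAt.continuousWithinAt)
    (fun x hx => (hg x (Ico_subset_Icc_self hx)).hasDerivWithinAt) bound

noncomputable def colloc (α t : ℝ) : ℝ :=
  4 * binomDiff α t - α * t * binomSum (α - 1) t - 6 * α * t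

noncomputable def colloc₁ (α t : ℝ) : ℝ :=
  3 * α * binomSum (α - 1) t - α * (α - 1) * t * binomDiff (α - 2) t - 6 * α

noncomputable def colloc₂ (α t : ℝ) : ℝ :=
  2 * α * (α - 1) * binomDiff (α - 2) t - α * (α - 1) * (α - 2) * t * binomSum (α - 3) t

noncomputable def colloc₃ (α t : ℝ) : ℝ :=
  binomSum (α - 3) t - (α - 3) * t * binomDiff (α - 4) t

section Derivatives

variable {α t : ℝ}

lemma hasDerivAt_colloc (h1 : 0 < 1 + t) (h2 : 0 < 1 - t) :
    HasDerivAt (colloc α) (colloc₁ α t) t := by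
  have hD := hasDerivAt_binomDiff rfl h1 h2 (p := α)
  have hS := hasDerivAt_binomSum (by ring) h1 h2 (p := α - 1) (q := α - 2)
  exact (((hD.const_mul 4).sub (((hasDerivAt_id' t).const_mul α).mul hS)).sub
    ((hasDerivAt_id' t).const_mul (6 * α))).congr_deriv (by rw [colloc₁]; ring)

lemma hasDerivAt_colloc₁ (h1 : 0 < 1 + t) (h2 : 0 < 1 - t) :
    HasDerivAt (colloc₁ α) (colloc₂ α t) t := by
  have hS := hasDerivAt_binomSum (by ring) h1 h2 (p := α - 1) (q := α - 2)
  have hD := hasDerivAt_binomDiff (by ring) h1 h2 (p := α - 2) (q := α - 3)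
  exact (((hS.const_mul (3 * α)).sub
    (((hasDerivAt_id' t).const_mul (α * (α - 1))).mul hD)).sub_const (6 * α)).congr_deriv
    (by rw [colloc₂]; ring)

lemma hasDerivAt_colloc₂ (h1 : 0 < 1 + t) (h2 : 0 < 1 - t) :
    HasDerivAt (colloc₂ α) (α * (α - 1) * (α - 2) * colloc₃ α t) t := by
  have hD := hasDerivAt_binomDiff (by ring) h1 h2 (p := α - 2) (q := α - 3)
  have hS := hasDerivAt_binomSum (by ring) h1 h2 (p := α - 3) (q := α - 4)
  exact ((hD.const_mul (2 * α * (α - 1))).sub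
    (((hasDerivAt_id' t).const_mul (α * (α - 1) * (α - 2))).mul hS)).congr_deriv
    (by rw [colloc₃]; ring)

lemma hasDerivAt_colloc₃ (h1 : 0 < 1 + t) (h2 : 0 < 1 - t) :
    HasDerivAt (colloc₃ α) (-((α - 3) * (α - 4) * t * binomSum (α - 5) t)) t := by
  have hS := hasDerivAt_binomSum (by ring) h1 h2 (p := α - 3) (q := α - 4)
  have hD := hasDerivAt_binomDiff (by ring) h1 h2 (p := α - 4) (q := α - 5)
  exact (hS.sub (((hasDerivAt_id' t).const_mul (α - 3)).mul hD)).congr_deriv (by ring)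

end Derivatives

section Bounds

variable {α : ℝ}

lemma falling_three_nonneg (hα : 2 ≤ α) : 0 ≤ α * (α - 1) * (α - 2) := by
  apply mul_nonneg (mul_nonneg _ _) <;> linarith

lemma colloc₃_ge (hα2 : 2 ≤ α) (hα3 : α ≤ 3) :
    ∀ t ∈ Icc (0:ℝ) (2/3), 2 - 28 * t ^ 2 ≤ colloc₃ α t := by
  refine image_le_of_hasDerivAt_le (f' := fun t => -(56 * t)) (fun t _ => ?_)
    (fun t ht => hasDerivAt_colloc₃ (by linarith [ht.1]) (by linarith [ht.2]))
    (by simp [colloc₃]) (fun t ht => ?_)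
  · exact (((hasDerivAt_pow 2 t).const_mul 28).const_sub 2).congr_deriv (by push_cast; ring)
  · have hS := binomSum_le_28 (p := α - 5) (by linarith) (by linarith) (Ico_subset_Icc_self ht)
    have hS0 : 0 ≤ binomSum (α - 5) t :=
      add_nonneg (rpow_nonneg (by linarith [ht.1]) _) (rpow_nonneg (by linarith [ht.2]) _)
    have hc : (α - 3) * (α - 4) ≤ 2 := by nlinarith
    have := mul_le_mul_of_nonneg_right (mul_le_mul hc hS hS0 (by norm_num)) ht.1
    linarith

lemma colloc₂_ge (hα2 : 2 ≤ α) (hα3 : α ≤ 3) :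
    ∀ t ∈ Icc (0:ℝ) (2/3),
      α * (α - 1) * (α - 2) * (2 * t - 28 / 3 * t ^ 3) ≤ colloc₂ α t := by
  refine image_le_of_hasDerivAt_le
    (f' := fun t => α * (α - 1) * (α - 2) * (2 - 28 * t ^ 2))
    (fun t _ => ?_) (fun t ht => hasDerivAt_colloc₂ (by linarith [ht.1]) (by linarith [ht.2]))
    (by simp [colloc₂]) (fun t ht => ?_)
  · exact ((((hasDerivAt_id' t).const_mul 2).sub
      ((hasDerivAt_pow 3 t).const_mul (28 / 3))).const_mul (α * (α - 1) * (α - 2))).congr_deriv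
      (by push_cast; ring)
  · exact mul_le_mul_of_nonneg_left (colloc₃_ge hα2 hα3 t (Ico_subset_Icc_self ht))
      (falling_three_nonneg hα2)

lemma colloc₁_ge (hα2 : 2 ≤ α) (hα3 : α ≤ 3) :
    ∀ t ∈ Icc (0:ℝ) (2/3),
      α * (α - 1) * (α - 2) * (t ^ 2 - 7 / 3 * t ^ 4) ≤ colloc₁ α t := by
  refine image_le_of_hasDerivAt_le
    (f' := fun t => α * (α - 1) * (α - 2) * (2 * t - 28 / 3 * t ^ 3))
    (fun t _ => ?_) (fun t ht => hasDerivAt_colloc₁ (by linarith [ht.1]) (by linarith [ht.2]))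
    (by simp [colloc₁]; linarith) (fun t ht => colloc₂_ge hα2 hα3 t (Ico_subset_Icc_self ht))
  exact (((hasDerivAt_pow 2 t).sub ((hasDerivAt_pow 4 t).const_mul (7 / 3))).const_mul
      (α * (α - 1) * (α - 2))).congr_deriv (by push_cast; ring)

lemma colloc_ge (hα2 : 2 ≤ α) (hα3 : α ≤ 3) :
    ∀ t ∈ Icc (0:ℝ) (2/3),
      α * (α - 1) * (α - 2) * (t ^ 3 / 3 - 7 / 15 * t ^ 5) ≤ colloc α t := by
  refine image_le_of_hasDerivAt_le
    (f' := fun t => α * (α - 1) * (α - 2) * (t ^ 2 - 7 / 3 * t ^ 4))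
    (fun t _ => ?_) (fun t ht => hasDerivAt_colloc (by linarith [ht.1]) (by linarith [ht.2]))
    (by simp [colloc]) (fun t ht => colloc₁_ge hα2 hα3 t (Ico_subset_Icc_self ht))
  exact ((((hasDerivAt_pow 3 t).div_const 3).sub
      ((hasDerivAt_pow 5 t).const_mul (7 / 15))).const_mul (α * (α - 1) * (α - 2))).congr_deriv
      (by push_cast; ring)

lemma colloc_ge_cube (hα2 : 2 ≤ α) (hα3 : α ≤ 3) {t : ℝ} (ht : t ∈ Icc (0:ℝ) (2/3)) :
    α * (α - 1) * (α - 2) / 10 * t ^ 3 ≤ colloc α t := by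
  have hpoly : t ^ 3 / 10 ≤ t ^ 3 / 3 - 7 / 15 * t ^ 5 := by
    have ht2 : t ^ 2 ≤ 4 / 9 := by nlinarith [ht.1, ht.2]
    nlinarith [pow_nonneg ht.1 3, mul_le_mul_of_nonneg_left ht2 (pow_nonneg ht.1 3)]
  calc α * (α - 1) * (α - 2) / 10 * t ^ 3
      = α * (α - 1) * (α - 2) * (t ^ 3 / 10) := by ring
    _ ≤ α * (α - 1) * (α - 2) * (t ^ 3 / 3 - 7 / 15 * t ^ 5) :=
        mul_le_mul_of_nonneg_left hpoly (falling_three_nonneg hα2)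
    _ ≤ colloc α t := colloc_ge hα2 hα3 t ht

end Bounds

lemma rpow_mul_colloc_one_div (α : ℝ) {z : ℝ} (hz : 0 < z) :
    z ^ α * colloc α (1 / z) =
      4 * z ^ α * ((1 + 1 / z) ^ α - (1 - 1 / z) ^ α)
        - α * z ^ (α - 1) * ((1 + 1 / z) ^ (α - 1) + 6 + (1 - 1 / z) ^ (α - 1)) := by
  rw [rpow_sub_one hz.ne', colloc, binomDiff, binomSum]
  ring

theorem stmt_17 (γ : ℝ) (hγ0 : 0 < γ) (hγ1 : γ < 1) (i : ℕ) (hi : 1 ≤ i) :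
    (1/10) * (3 - γ) * (2 - γ) * (1 - γ) * ((i : ℝ) + 1/2) ^ (-γ)
        ≤ 4 * ((i : ℝ) + 1/2) ^ (3 - γ)
            * ((1 + 1 / ((i : ℝ) + 1/2)) ^ (3 - γ) - (1 - 1 / ((i : ℝ) + 1/2)) ^ (3 - γ))
          - (3 - γ) * ((i : ℝ) + 1/2) ^ (2 - γ)
            * ((1 + 1 / ((i : ℝ) + 1/2)) ^ (2 - γ) + 6 + (1 - 1 / ((i : ℝ) + 1/2)) ^ (2 - γ)) ∧
    0 < (1/10) * (3 - γ) * (2 - γ) * (1 - γ) * ((i : ℝ) + 1/2) ^ (-γ) := by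
  have hz : (3:ℝ) / 2 ≤ (i : ℝ) + 1/2 := by
    have : (1:ℝ) ≤ i := by exact_mod_cast hi
    linarith
  generalize (i : ℝ) + 1/2 = z at hz ⊢
  have hz0 : 0 < z := by linarith
  have ht : 1 / z ∈ Icc (0:ℝ) (2/3) :=
    ⟨by positivity, by rw [div_le_iff₀ hz0]; linarith⟩
  have hbound := colloc_ge_cube (α := 3 - γ) (by linarith) (by linarith) ht
  have hexpand := rpow_mul_colloc_one_div (3 - γ) hz0
  rw [show (3:ℝ) - γ - 1 = 2 - γ by ring] at hexpand
  have hscale : z ^ (-γ) = z ^ (3 - γ) * (1 / z) ^ 3 := by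
    rw [show -γ = (3 - γ) - 3 by ring, rpow_sub hz0, rpow_ofNat]
    ring
  have hcoef : 0 < (1/10) * (3 - γ) * (2 - γ) * (1 - γ) := by
    apply mul_pos (mul_pos (mul_pos _ _) _) <;> linarith
  refine ⟨?_, mul_pos hcoef (rpow_pos_of_pos hz0 _)⟩
  calc (1/10) * (3 - γ) * (2 - γ) * (1 - γ) * z ^ (-γ)
      = z ^ (3 - γ) * ((3 - γ) * (3 - γ - 1) * (3 - γ - 2) / 10 * (1 / z) ^ 3) := by
        rw [hscale]; ring
    _ ≤ z ^ (3 - γ) * colloc (3 - γ) (1 / z) :=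
        mul_le_mul_of_nonneg_left hbound (rpow_nonneg hz0.le _)
    _ = _ := hexpand
end

section
/- For 0 < γ < 1, the matrix A = D − G, with D = diag(d₁,…,d_{N−1}), d_i = (2−γ)(i^{1−γ} + (N−i)^{1−γ}), and G the symmetric Toeplitz matrix with first row (g₀, g₁, …, g_{N−2}), g₀ = 2, g_k = (k+1)^{2−γ} − 2k^{2−γ} + (k−1)^{2−γ}, is strictly diagonally dominant by rows with positive diagonal and nonpositive off-diagonal entries; moreover each row sum equals ρ_i = α_i + α_{N−i} where α_j = (j−1)^{2−γ} − j^{2−γ} + (2−γ)j^{1−γ} > 0. -/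
/-!
With `p = 2 - γ > 1` and `F k = k ^ p`, each `g (k + 1)` is the second difference of `F` at
`k + 1`, which is nonnegative by convexity; hence the off-diagonal entries are nonpositive. The
sums of the `g`'s along a row of the Toeplitz matrix telescope to first differences of `F`, and
the row sum becomes `α (i + 1) + α (N - i - 1)`. Each `α j` is the gap in the tangent-line
inequality of the strictly convex `F` between `j - 1` and `j`, hence positive. Nonpositive
off-diagonal entries and positive row sums give strict diagonal dominance, and with it a
positive diagonal.
-/

open Finset

lemma two_mul_rpow_le_rpow_sub_one_add_rpow_add_one {p x : ℝ} (hp : 1 ≤ p) (hx : 1 ≤ x) :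
    2 * x ^ p ≤ (x - 1) ^ p + (x + 1) ^ p := by
  have := (convexOn_rpow hp).slope_mono_adjacent (x := x - 1) (y := x) (z := x + 1)
    (by simp; linarith) (by simp; linarith) (by linarith) (by linarith)
  rw [sub_sub_cancel, add_sub_cancel_left, div_one, div_one] at this
  linarith

lemma rpow_sub_rpow_sub_one_lt {p x : ℝ} (hp : 1 < p) (hx : 1 ≤ x) :
    x ^ p - (x - 1) ^ p < p * x ^ (p - 1) := by
  have := (strictConvexOn_rpow hp).slope_lt_of_hasDerivAt (x := x - 1) (y := x)
    (by simp; linarith) (by simp; linarith) (by linarith)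
    (Real.hasDerivAt_rpow_const (Or.inr hp.le))
  rwa [slope_def_field, sub_sub_cancel, div_one] at this

lemma sum_erase_abs_lt_of_nonpos_of_sum_pos {ι : Type*} [Fintype ι] [DecidableEq ι]
    {v : ι → ℝ} {i : ι} (hv : ∀ j, j ≠ i → v j ≤ 0) (hsum : 0 < ∑ j, v j) :
    ∑ j ∈ univ.erase i, |v j| < v i := by
  rw [sum_congr rfl fun j hj => abs_of_nonpos (hv j (ne_of_mem_erase hj)), sum_neg_distrib,
    sum_erase_eq_sub (mem_univ i)]
  linarith

lemma Finset.sum_range_dist_eq {M : Type*} [AddCommMonoid M] (g : ℕ → M) (i m : ℕ) :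
    ∑ j ∈ range (i + 1 + m), g (Nat.dist i j)
      = g 0 + ∑ k ∈ range i, g (k + 1) + ∑ k ∈ range m, g (k + 1) := by
  have hleft : ∑ j ∈ range (i + 1), g (Nat.dist i j) = ∑ k ∈ range (i + 1), g k := by
    rw [← sum_range_reflect]
    refine sum_congr rfl fun k hk => congrArg g ?_
    rw [mem_range] at hk
    simp only [Nat.dist]
    omega
  rw [sum_range_add, hleft, sum_range_succ', add_comm (∑ k ∈ range i, _)]
  congr 1
  refine sum_congr rfl fun k _ => congrArg g ?_
  simp only [Nat.dist]
  omega

lemma Finset.sum_range_dist_of_second_diff {M : Type*} [AddCommGroup M] {g F : ℕ → M}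
    (hg : ∀ k, g (k + 1) = F (k + 2) - F (k + 1) - (F (k + 1) - F k)) (i m : ℕ) :
    ∑ j ∈ range (i + 1 + m), g (Nat.dist i j)
      = g 0 + (F (i + 1) - F i) + (F (m + 1) - F m) - 2 • (F 1 - F 0) := by
  rw [sum_range_dist_eq, sum_congr rfl fun k _ => hg k, sum_congr rfl fun k _ => hg k,
    sum_range_sub (fun k => F (k + 1) - F k), sum_range_sub (fun k => F (k + 1) - F k)]
  abel

lemma sum_range_dist_rpow_second_diff {p : ℝ} (hp : p ≠ 0) {g : ℕ → ℝ} (hg0 : g 0 = 2)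
    (hg : ∀ k : ℕ, 1 ≤ k →
      g k = ((k : ℝ) + 1) ^ p - 2 * (k : ℝ) ^ p + ((k : ℝ) - 1) ^ p) (i m : ℕ) :
    ∑ j ∈ range (i + 1 + m), g (Nat.dist i j)
      = ((i : ℝ) + 1) ^ p - (i : ℝ) ^ p + (((m : ℝ) + 1) ^ p - (m : ℝ) ^ p) := by
  have hF : ∀ k : ℕ, g (k + 1) = ((k + 2 : ℕ) : ℝ) ^ p - ((k + 1 : ℕ) : ℝ) ^ p
      - (((k + 1 : ℕ) : ℝ) ^ p - (k : ℝ) ^ p) := fun k => by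
    rw [hg (k + 1) le_add_self]
    push_cast
    ring_nf
  rw [sum_range_dist_of_second_diff (F := fun k : ℕ => (k : ℝ) ^ p) hF, hg0]
  push_cast
  rw [Real.zero_rpow hp, Real.one_rpow]
  ring

lemma stiffness_row_sum (γ : ℝ) (hγ : γ ≠ 2) (N : ℕ) (g : ℕ → ℝ) (hg0 : g 0 = 2)
    (hg : ∀ k : ℕ, 1 ≤ k →
      g k = ((k : ℝ) + 1) ^ (2 - γ) - 2 * (k : ℝ) ^ (2 - γ) + ((k : ℝ) - 1) ^ (2 - γ))
    (d : ℕ → ℝ)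
    (hd : ∀ i : ℕ, d i = (2 - γ) * ((i : ℝ) ^ (1 - γ) + ((N : ℝ) - (i : ℝ)) ^ (1 - γ)))
    (α : ℕ → ℝ)
    (hα : ∀ j : ℕ, α j = ((j : ℝ) - 1) ^ (2 - γ) - (j : ℝ) ^ (2 - γ) + (2 - γ) * (j : ℝ) ^ (1 - γ))
    (A : Matrix (Fin (N - 1)) (Fin (N - 1)) ℝ)
    (hA : ∀ i j : Fin (N - 1),
      A i j = if i = j then d (i.1 + 1) - g 0 else -g (Nat.dist i.1 j.1)) (i : Fin (N - 1)) :
    ∑ j, A i j = α (i.1 + 1) + α (N - (i.1 + 1)) := by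
  have hsum : ∑ j, A i j = d (i.1 + 1) - ∑ j ∈ range (N - 1), g (Nat.dist i.1 j) := by
    have hA' : ∀ j, A i j = (if i = j then d (i.1 + 1) else 0) - g (Nat.dist i.1 j.1) := by
      intro j
      rw [hA]
      split_ifs with hij
      · rw [hij, Nat.dist_self]
      · rw [zero_sub]
    rw [sum_congr rfl fun j _ => hA' j, sum_sub_distrib, sum_ite_eq, if_pos (mem_univ i),
      Fin.sum_univ_eq_sum_range (fun j => g (Nat.dist i.1 j))]
  obtain ⟨m, hm⟩ : ∃ m, N = i.1 + m + 2 := ⟨N - 2 - i.1, by omega⟩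
  rw [hsum]
  generalize i.1 = k at hm ⊢
  subst hm
  rw [show k + m + 2 - 1 = k + 1 + m by omega, show k + m + 2 - (k + 1) = m + 1 by omega,
    sum_range_dist_rpow_second_diff (sub_ne_zero.2 hγ.symm) hg0 hg, hd, hα, hα]
  push_cast
  rw [show (1 : ℝ) - γ = 2 - γ - 1 by ring]
  ring_nf

theorem stmt_18_general (γ : ℝ) (hγ1 : γ < 1) (N : ℕ)
    (g : ℕ → ℝ)
    (hg0 : g 0 = 2)
    (hg : ∀ k : ℕ, 1 ≤ k →
      g k = ((k : ℝ) + 1) ^ (2 - γ) - 2 * (k : ℝ) ^ (2 - γ) + ((k : ℝ) - 1) ^ (2 - γ))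
    (d : ℕ → ℝ)
    (hd : ∀ i : ℕ, d i = (2 - γ) * ((i : ℝ) ^ (1 - γ) + ((N : ℝ) - (i : ℝ)) ^ (1 - γ)))
    (α : ℕ → ℝ)
    (hα : ∀ j : ℕ, α j = ((j : ℝ) - 1) ^ (2 - γ) - (j : ℝ) ^ (2 - γ) + (2 - γ) * (j : ℝ) ^ (1 - γ))
    (A : Matrix (Fin (N - 1)) (Fin (N - 1)) ℝ)
    (hA : ∀ i j : Fin (N - 1),
      A i j = if i = j then d (i.1 + 1) - g 0 else -g (Nat.dist i.1 j.1)) :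
    (∀ i : Fin (N - 1), 0 < A i i) ∧
    (∀ i j : Fin (N - 1), i ≠ j → A i j ≤ 0) ∧
    (∀ i : Fin (N - 1), ∑ j ∈ Finset.univ.erase i, |A i j| < A i i) ∧
    (∀ i : Fin (N - 1), ∑ j, A i j = α (i.1 + 1) + α (N - (i.1 + 1))) ∧
    (∀ j : ℕ, 1 ≤ j → j ≤ N - 1 → 0 < α j) := by
  have hp : 1 < 2 - γ := by linarith
  have hg_nonneg : ∀ k, 0 ≤ g k := by
    rintro (_ | k)
    · rw [hg0]; norm_num
    · have := two_mul_rpow_le_rpow_sub_one_add_rpow_add_one hp.le (x := (k + 1 : ℕ))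
        (Nat.one_le_cast.2 le_add_self)
      rw [hg (k + 1) le_add_self]
      linarith
  have hα_pos : ∀ j, 1 ≤ j → 0 < α j := fun j hj => by
    have := rpow_sub_rpow_sub_one_lt hp (Nat.one_le_cast.2 hj)
    rw [hα, show (1 : ℝ) - γ = 2 - γ - 1 by ring]
    linarith
  have hoff : ∀ i j : Fin (N - 1), i ≠ j → A i j ≤ 0 := fun i j hij => by
    rw [hA, if_neg hij, neg_nonpos]
    exact hg_nonneg _
  have hrow := stiffness_row_sum γ (by linarith : γ < 2).ne N g hg0 hg d hd α hα A hA
  have hdom : ∀ i, ∑ j ∈ univ.erase i, |A i j| < A i i := fun i =>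
    sum_erase_abs_lt_of_nonpos_of_sum_pos (fun j hj => hoff i j hj.symm) <| by
      rw [hrow i]
      exact add_pos (hα_pos _ (by omega)) (hα_pos _ (by omega))
  exact ⟨fun i => (sum_nonneg fun j _ => abs_nonneg _).trans_lt (hdom i), hoff, hdom, hrow,
    fun j hj _ => hα_pos j hj⟩

/-- Properties of the stiffness matrix `A = D − G` of the piecewise linear
collocation scheme for the nonlocal problem. -/
theorem stmt_18 (γ : ℝ) (hγ0 : 0 < γ) (hγ1 : γ < 1) (N : ℕ) (hN : 2 ≤ N)
    (g : ℕ → ℝ)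
    (hg0 : g 0 = 2)
    (hg : ∀ k : ℕ, 1 ≤ k →
      g k = ((k : ℝ) + 1) ^ (2 - γ) - 2 * (k : ℝ) ^ (2 - γ) + ((k : ℝ) - 1) ^ (2 - γ))
    (d : ℕ → ℝ)
    (hd : ∀ i : ℕ, d i = (2 - γ) * ((i : ℝ) ^ (1 - γ) + ((N : ℝ) - (i : ℝ)) ^ (1 - γ)))
    (α : ℕ → ℝ)
    (hα : ∀ j : ℕ, α j = ((j : ℝ) - 1) ^ (2 - γ) - (j : ℝ) ^ (2 - γ) + (2 - γ) * (j : ℝ) ^ (1 - γ))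
    (A : Matrix (Fin (N - 1)) (Fin (N - 1)) ℝ)
    (hA : ∀ i j : Fin (N - 1),
      A i j = if i = j then d (i.1 + 1) - g 0 else -g (Nat.dist i.1 j.1)) :
    (∀ i : Fin (N - 1), 0 < A i i) ∧
    (∀ i j : Fin (N - 1), i ≠ j → A i j ≤ 0) ∧
    (∀ i : Fin (N - 1), ∑ j ∈ Finset.univ.erase i, |A i j| < A i i) ∧
    (∀ i : Fin (N - 1), ∑ j, A i j = α (i.1 + 1) + α (N - (i.1 + 1))) ∧
    (∀ j : ℕ, 1 ≤ j → j ≤ N - 1 → 0 < α j) :=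
  stmt_18_general γ hγ1 N g hg0 hg d hd α hα A hA
end
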